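/- (Completeness of the MILP encoding of STL.) Let φ be a negation-free STL formula built from predicates, finite conjunctions, finite disjunctions, bounded always □_{[a,b]}, and bounded eventually ◇_{[a,b]}, and let L ∈ ℕ with ‖φ‖ ≤ L. Fix an output sequence y_0, …, y_L ∈ ℝ^{n_y} and constants M_t, ε_t for each t ∈ {0,…,L} such that for every predicate σ occurring in φ and every t ≤ L: ε_t > 0, |h_σ(y_t)| ≥ ε_t, and M_t ≥ |h_σ(y_t)| + ε_t. If some (equivalently, every) infinite sequence ŷ with ŷ_s = y_s for 0 ≤ s ≤ L satisfies (ŷ, 0) ⊨ φ, then there exists an assignment of values ζ_t^ψ ∈ [0,1] to every subformula ψ of φ and every t ∈ {0,…,L}, with ζ_t^σ ∈ {0,1} for predicates, satisfying all encoding constraints (the big-M predicate constraints h_σ(y_t) ≤ M_t ζ_t^σ − ε_t and −h_σ(y_t) ≤ M_t(1 − ζ_t^σ) − ε_t; for conjunctions ζ_t^ψ ≤ ζ_t^{ψ_i} for all i and ζ_t^ψ ≥ 1 − m + Σ_i ζ_t^{ψ_i}; for disjunctions ζ_t^ψ ≥ ζ_t^{ψ_i} for all i and ζ_t^ψ ≤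 Σ_i ζ_t^{ψ_i}; for □_{[a,b]} ψ' the conjunction constraints over ζ_i^{ψ'}, i = min(t+a,L),…,min(t+b,L); for ◇_{[a,b]} ψ' the disjunction constraints over ζ_i^{ψ'}, i = min(t+a,L),…,min(t+b,L)) and such that ζ_0^φ = 1. -/
import Mathlib


/-- Negation-free STL formulas over the output space `ℝ^{n_y}`: predicates `h(y) > 0`,
finite conjunctions, finite disjunctions, bounded always, and bounded eventually. -/
inductive NFSTL (ny : ℕ) : Type where
  | pred : ((Fin ny → ℝ) → ℝ) → NFSTL ny
  | conj : List (NFSTL ny) → NFSTL ny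
  | disj : List (NFSTL ny) → NFSTL ny
  | always : ℕ → ℕ → NFSTL ny → NFSTL ny
  | event : ℕ → ℕ → NFSTL ny → NFSTL ny

mutual
  /-- STL semantics: `NFSTL.sat y t φ` means `(y, t) ⊨ φ`. -/
  def NFSTL.sat {ny : ℕ} (y : ℕ → Fin ny → ℝ) : ℕ → NFSTL ny → Prop
    | t, .pred h => 0 < h (y t)
    | t, .conj l => NFSTL.satAll y t l
    | t, .disj l => NFSTL.satAny y t l
    | t, .always a b φ => ∀ t', t + a ≤ t' → t' ≤ t + b → NFSTL.sat y t' φ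
    | t, .event a b φ => ∃ t', t + a ≤ t' ∧ t' ≤ t + b ∧ NFSTL.sat y t' φ

  /-- All formulas in the list are satisfied (finite conjunction). -/
  def NFSTL.satAll {ny : ℕ} (y : ℕ → Fin ny → ℝ) : ℕ → List (NFSTL ny) → Prop
    | _, [] => True
    | t, φ :: l => NFSTL.sat y t φ ∧ NFSTL.satAll y t l

  /-- Some formula in the list is satisfied (finite disjunction). -/
  def NFSTL.satAny {ny : ℕ} (y : ℕ → Fin ny → ℝ) : ℕ → List (NFSTL ny) → Prop
    | _, [] => False
    | t, φ :: l => NFSTL.sat y t φ ∨ NFSTL.satAny y t l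
end

mutual
  /-- The formula length `‖φ‖`. -/
  def NFSTL.len {ny : ℕ} : NFSTL ny → ℕ
    | .pred _ => 0
    | .conj l => NFSTL.lenMax l
    | .disj l => NFSTL.lenMax l
    | .always _ b φ => φ.len + b
    | .event _ b φ => φ.len + b

  /-- Maximum of the lengths of the formulas in a list. -/
  def NFSTL.lenMax {ny : ℕ} : List (NFSTL ny) → ℕ
    | [] => 0
    | φ :: l => max φ.len (NFSTL.lenMax l)
end

/-- Well-formedness according to the grammar: in every temporal operator `a ≤ b`. -/
inductive NFSTL.WF {ny : ℕ} : NFSTL ny → Prop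
  | pred (h : (Fin ny → ℝ) → ℝ) : WF (pred h)
  | conj {l} : (∀ ψ ∈ l, WF ψ) → WF (conj l)
  | disj {l} : (∀ ψ ∈ l, WF ψ) → WF (disj l)
  | always {a b φ} : a ≤ b → WF φ → WF (always a b φ)
  | event {a b φ} : a ≤ b → WF φ → WF (event a b φ)

/-- `NFSTL.Subf ψ φ` : `ψ` is a subformula of `φ`. -/
inductive NFSTL.Subf {ny : ℕ} : NFSTL ny → NFSTL ny → Prop
  | refl (φ) : Subf φ φ
  | conj {ψ φ l} : φ ∈ l → Subf ψ φ → Subf ψ (.conj l)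
  | disj {ψ φ l} : φ ∈ l → Subf ψ φ → Subf ψ (.disj l)
  | always {ψ a b φ} : Subf ψ φ → Subf ψ (.always a b φ)
  | event {ψ a b φ} : Subf ψ φ → Subf ψ (.event a b φ)


mutual
  /-- Clipped satisfaction: temporal windows are intersected with `[0, L]`. -/
  def SatC {ny : ℕ} (L : ℕ) (y : ℕ → Fin ny → ℝ) : ℕ → NFSTL ny → Prop
    | t, .pred h => 0 < h (y t)
    | t, .conj l => SatCAll L y t l
    | t, .disj l => SatCAny L y t l
    | t, .always a b φ => ∀ i, min (t + a) L ≤ i → i ≤ min (t + b) L → SatC L y i φ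
    | t, .event a b φ => ∃ i, min (t + a) L ≤ i ∧ i ≤ min (t + b) L ∧ SatC L y i φ

  def SatCAll {ny : ℕ} (L : ℕ) (y : ℕ → Fin ny → ℝ) : ℕ → List (NFSTL ny) → Prop
    | _, [] => True
    | t, φ :: l => SatC L y t φ ∧ SatCAll L y t l

  def SatCAny {ny : ℕ} (L : ℕ) (y : ℕ → Fin ny → ℝ) : ℕ → List (NFSTL ny) → Prop
    | _, [] => False
    | t, φ :: l => SatC L y t φ ∨ SatCAny L y t l
end

theorem satCAll_iff {ny L : ℕ} (y : ℕ → Fin ny → ℝ) (t : ℕ) :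
    ∀ l : List (NFSTL ny), SatCAll L y t l ↔ ∀ ψ ∈ l, SatC L y t ψ
  | [] => by simp [SatCAll]
  | φ :: l => by simp [SatCAll, satCAll_iff y t l]

theorem satCAny_iff {ny L : ℕ} (y : ℕ → Fin ny → ℝ) (t : ℕ) :
    ∀ l : List (NFSTL ny), SatCAny L y t l ↔ ∃ ψ ∈ l, SatC L y t ψ
  | [] => by simp [SatCAny]
  | φ :: l => by simp [SatCAny, satCAny_iff y t l]

theorem lenMax_le {ny : ℕ} : ∀ (l : List (NFSTL ny)) (ψ : NFSTL ny), ψ ∈ l → ψ.len ≤ NFSTL.lenMax l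
  | φ :: l, ψ, hm => by
      rcases List.mem_cons.mp hm with h | h
      · subst h; simp [NFSTL.lenMax]
      · simp only [NFSTL.lenMax]
        exact le_trans (lenMax_le l ψ h) (le_max_right _ _)

mutual
theorem sat_satC {ny L : ℕ} {y yh : ℕ → Fin ny → ℝ} (hag : ∀ s ≤ L, yh s = y s) :
    ∀ (t : ℕ) (φ : NFSTL ny), NFSTL.WF φ → t + φ.len ≤ L → NFSTL.sat yh t φ → SatC L y t φ
  | t, .pred h, _, hl, hs => by
      simp only [NFSTL.sat] at hs
      simp only [SatC]
      rwa [← hag t (by simpa [NFSTL.len] using hl)]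
  | t, .conj l, hwf, hl, hs => by
      cases hwf with
      | conj hw =>
        simp only [NFSTL.sat] at hs
        simp only [SatC]
        exact sat_satC_all hag t l hw (by simpa [NFSTL.len] using hl) hs
  | t, .disj l, hwf, hl, hs => by
      cases hwf with
      | disj hw =>
        simp only [NFSTL.sat] at hs
        simp only [SatC]
        exact sat_satC_any hag t l hw (by simpa [NFSTL.len] using hl) hs
  | t, .always a b φ, hwf, hl, hs => by
      cases hwf with
      | always hab hw =>
        simp only [NFSTL.len] at hl
        simp only [NFSTL.sat] at hs
        simp only [SatC]
        intro i h1 h2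
        have hbL : t + b ≤ L := by omega
        have haL : t + a ≤ L := by omega
        rw [min_eq_left haL] at h1
        rw [min_eq_left hbL] at h2
        exact sat_satC hag i φ hw (by omega) (hs i h1 h2)
  | t, .event a b φ, hwf, hl, hs => by
      cases hwf with
      | event hab hw =>
        simp only [NFSTL.len] at hl
        simp only [NFSTL.sat] at hs
        simp only [SatC]
        obtain ⟨t', h1, h2, hst⟩ := hs
        refine ⟨t', le_trans (min_le_left _ _) h1, le_min h2 (by omega), ?_⟩
        exact sat_satC hag t' φ hw (by omega) hst

theorem sat_satC_all {ny L : ℕ} {y yh : ℕ → Fin ny → ℝ} (hag : ∀ s ≤ L, yh s = y s) :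
    ∀ (t : ℕ) (l : List (NFSTL ny)), (∀ ψ ∈ l, NFSTL.WF ψ) → t + NFSTL.lenMax l ≤ L →
      NFSTL.satAll yh t l → SatCAll L y t l
  | _, [], _, _, _ => trivial
  | t, φ :: l, hw, hl, hs => by
      simp only [NFSTL.lenMax] at hl
      simp only [NFSTL.satAll] at hs
      exact ⟨sat_satC hag t φ (hw φ (by simp)) (by omega) hs.1,
        sat_satC_all hag t l (fun ψ h => hw ψ (by simp [h])) (by omega) hs.2⟩

theorem sat_satC_any {ny L : ℕ} {y yh : ℕ → Fin ny → ℝ} (hag : ∀ s ≤ L, yh s = y s) :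
    ∀ (t : ℕ) (l : List (NFSTL ny)), (∀ ψ ∈ l, NFSTL.WF ψ) → t + NFSTL.lenMax l ≤ L →
      NFSTL.satAny yh t l → SatCAny L y t l
  | t, φ :: l, hw, hl, hs => by
      simp only [NFSTL.lenMax] at hl
      simp only [NFSTL.satAny] at hs
      rcases hs with hs | hs
      · exact Or.inl (sat_satC hag t φ (hw φ (by simp)) (by omega) hs)
      · exact Or.inr (sat_satC_any hag t l (fun ψ h => hw ψ (by simp [h])) (by omega) hs)
end

theorem list_sum_ones {α : Type*} :
    ∀ (l : List α) (f : α → ℝ), (∀ x ∈ l, f x = 1) → (l.map f).sum = l.length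
  | [], _, _ => by simp
  | x :: l, f, h => by
      simp only [List.map_cons, List.sum_cons, List.length_cons, h x (by simp),
        list_sum_ones l f (fun z hz => h z (by simp [hz]))]
      push_cast; ring

theorem list_sum_le_len {α : Type*} :
    ∀ (l : List α) (f : α → ℝ), (∀ x ∈ l, f x ≤ 1) → (l.map f).sum ≤ l.length
  | [], _, _ => by simp
  | x :: l, f, h => by
      have h1 := h x (by simp)
      have h2 := list_sum_le_len l f (fun z hz => h z (by simp [hz]))
      simp only [List.map_cons, List.sum_cons, List.length_cons]
      push_cast; linarith

theorem list_sum_le_len_sub {α : Type*} :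
    ∀ (l : List α) (f : α → ℝ), (∀ x ∈ l, f x ≤ 1) → ∀ x0 ∈ l, f x0 ≤ 0 →
      (l.map f).sum ≤ (l.length : ℝ) - 1
  | x :: l, f, h, x0, hm, h0 => by
      rcases List.mem_cons.mp hm with rfl | hm
      · have h2 := list_sum_le_len l f (fun z hz => h z (by simp [hz]))
        simp only [List.map_cons, List.sum_cons, List.length_cons]
        push_cast; linarith
      · have h2 := list_sum_le_len_sub l f (fun z hz => h z (by simp [hz])) x0 hm h0
        have h1 := h x (by simp)
        simp only [List.map_cons, List.sum_cons, List.length_cons]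
        push_cast; linarith
/-- The MILP encoding constraints attached to a formula `ψ` at time `t`, for the
assignment `ζ`, horizon `L`, output data `y`, and big-M constants `M`, `ε`. -/
def EncOK {ny : ℕ} (L : ℕ) (y : ℕ → Fin ny → ℝ) (M ε : ℕ → ℝ)
    (ζ : NFSTL ny → ℕ → ℝ) : NFSTL ny → ℕ → Prop
  | .pred h, t =>
      (ζ (.pred h) t = 0 ∨ ζ (.pred h) t = 1) ∧
      h (y t) ≤ M t * ζ (.pred h) t - ε t ∧
      -h (y t) ≤ M t * (1 - ζ (.pred h) t) - ε t
  | .conj l, t =>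
      (∀ ψ ∈ l, ζ (.conj l) t ≤ ζ ψ t) ∧
      1 - (l.length : ℝ) + (l.map fun ψ => ζ ψ t).sum ≤ ζ (.conj l) t
  | .disj l, t =>
      (∀ ψ ∈ l, ζ ψ t ≤ ζ (.disj l) t) ∧
      ζ (.disj l) t ≤ (l.map fun ψ => ζ ψ t).sum
  | .always a b ψ, t =>
      (∀ i ∈ Finset.Icc (min (t + a) L) (min (t + b) L), ζ (.always a b ψ) t ≤ ζ ψ i) ∧
      1 - ((Finset.Icc (min (t + a) L) (min (t + b) L)).card : ℝ)
          + ∑ i ∈ Finset.Icc (min (t + a) L) (min (t + b) L), ζ ψ i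
        ≤ ζ (.always a b ψ) t
  | .event a b ψ, t =>
      (∀ i ∈ Finset.Icc (min (t + a) L) (min (t + b) L), ζ ψ i ≤ ζ (.event a b ψ) t) ∧
      ζ (.event a b ψ) t ≤ ∑ i ∈ Finset.Icc (min (t + a) L) (min (t + b) L), ζ ψ i

/-- Completeness of the MILP encoding of STL: if `‖φ‖ ≤ L`, the big-M constants are
adequate for every predicate occurring in `φ` (`ε_t > 0`, `|h(y_t)| ≥ ε_t`, and
`M_t ≥ |h(y_t)| + ε_t`), and some infinite sequence agreeing with `y` on `{0,…,L}`
satisfies `φ` at time `0`, then there is an assignment `ζ` of values in `[0,1]` to all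
subformulas of `φ` and all times `t ≤ L` (binary on predicates) satisfying all encoding
constraints and such that `ζ_0^φ = 1`. -/
theorem milp_encoding_complete {ny : ℕ} (φ : NFSTL ny) (hwf : NFSTL.WF φ) (L : ℕ)
    (hlen : φ.len ≤ L)
    (y : ℕ → Fin ny → ℝ) (M ε : ℕ → ℝ)
    (hpred : ∀ h : (Fin ny → ℝ) → ℝ, NFSTL.Subf (.pred h) φ → ∀ t ≤ L,
      0 < ε t ∧ ε t ≤ |h (y t)| ∧ |h (y t)| + ε t ≤ M t)
    (hsat : ∃ yhat : ℕ → Fin ny → ℝ, (∀ s ≤ L, yhat s = y s) ∧ NFSTL.sat yhat 0 φ) :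
    ∃ ζ : NFSTL ny → ℕ → ℝ,
      (∀ ψ : NFSTL ny, NFSTL.Subf ψ φ → ∀ t ≤ L, 0 ≤ ζ ψ t ∧ ζ ψ t ≤ 1) ∧
      (∀ ψ : NFSTL ny, NFSTL.Subf ψ φ → ∀ t ≤ L, EncOK L y M ε ζ ψ t) ∧
      ζ φ 0 = 1 := by
  classical
  obtain ⟨yh, hag, hsat0⟩ := hsat
  refine ⟨fun ψ t => if SatC L y t ψ then 1 else 0, ?_, ?_, ?_⟩
  · intro ψ _ t _
    by_cases h : SatC L y t ψ <;> simp [h]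
  · have hnn : ∀ (χ : NFSTL ny) (i : ℕ),
        (0:ℝ) ≤ if SatC L y i χ then 1 else 0 := by
      intro χ i; by_cases h : SatC L y i χ <;> simp [h]
    have hle1 : ∀ (χ : NFSTL ny) (i : ℕ),
        (if SatC L y i χ then (1:ℝ) else 0) ≤ 1 := by
      intro χ i; by_cases h : SatC L y i χ <;> simp [h]
    intro ψ hsub t ht
    cases ψ with
    | pred h =>
      obtain ⟨hε, hεh, hM⟩ := hpred h hsub t ht
      simp only [EncOK]
      by_cases hs : SatC L y t (.pred h)
      · have hpos : 0 < h (y t) := by simpa [SatC] using hs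
        have habs : |h (y t)| = h (y t) := abs_of_pos hpos
        rw [habs] at hεh hM
        refine ⟨Or.inr (by simp [hs]), ?_, ?_⟩ <;> simp [hs] <;> linarith
      · have hpos : ¬ 0 < h (y t) := by simpa [SatC] using hs
        have habs : |h (y t)| = -h (y t) := abs_of_nonpos (by linarith [not_lt.mp hpos])
        rw [habs] at hεh hM
        refine ⟨Or.inl (by simp [hs]), ?_, ?_⟩ <;> simp [hs] <;> linarith
    | conj l =>
      simp only [EncOK]
      by_cases hs : SatC L y t (.conj l)
      · have hall : ∀ χ ∈ l, SatC L y t χ :=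
          (satCAll_iff y t l).mp (by simpa [SatC] using hs)
        have hsum : (l.map fun χ => if SatC L y t χ then (1:ℝ) else 0).sum = l.length :=
          list_sum_ones l _ (fun χ hχ => by simp [hall χ hχ])
        refine ⟨fun χ hχ => by simp [hs, hall χ hχ], ?_⟩
        rw [hsum]; simp [hs]
      · have : ¬ ∀ χ ∈ l, SatC L y t χ := fun hc => hs (by
          simp only [SatC]; exact (satCAll_iff y t l).mpr hc)
        push_neg at this
        obtain ⟨χ0, hχ0, hns⟩ := this
        constructor
        · intro χ hχ; simp only [hs, if_false]; exact hnn χ t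
        · have hsum := list_sum_le_len_sub l (fun χ => if SatC L y t χ then (1:ℝ) else 0)
            (fun χ _ => hle1 χ t) χ0 hχ0 (by simp [hns])
          simp only [hs, if_false]; linarith
    | disj l =>
      simp only [EncOK]
      by_cases hs : SatC L y t (.disj l)
      · obtain ⟨χ0, hχ0, hsc⟩ := (satCAny_iff y t l).mp (by simpa [SatC] using hs)
        refine ⟨fun χ hχ => by simp [hs]; exact hle1 χ t, ?_⟩
        have := List.single_le_sum (l := l.map fun χ => if SatC L y t χ then (1:ℝ) else 0)
          (by intro x hx; obtain ⟨χ, _, rfl⟩ := List.mem_map.mp hx; exact hnn χ t)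
          _ (List.mem_map.mpr ⟨χ0, hχ0, rfl⟩)
        simp only [hs, if_true]
        simpa [hsc] using this
      · have hnone : ∀ χ ∈ l, ¬ SatC L y t χ := by
          intro χ hχ hc
          exact hs (by simp only [SatC]; exact (satCAny_iff y t l).mpr ⟨χ, hχ, hc⟩)
        refine ⟨fun χ hχ => by simp [hs, hnone χ hχ], ?_⟩
        simp only [hs, if_false]
        exact List.sum_nonneg (by
          intro x hx; obtain ⟨χ, _, rfl⟩ := List.mem_map.mp hx; exact hnn χ t)
    | always a b ψ' =>
      simp only [EncOK]
      by_cases hs : SatC L y t (.always a b ψ')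
      · have hall : ∀ i ∈ Finset.Icc (min (t + a) L) (min (t + b) L), SatC L y i ψ' := by
          have hs' : ∀ i, min (t + a) L ≤ i → i ≤ min (t + b) L → SatC L y i ψ' := by
            simpa [SatC] using hs
          intro i hi
          rw [Finset.mem_Icc] at hi
          exact hs' i hi.1 hi.2
        have hsum : ∑ i ∈ Finset.Icc (min (t + a) L) (min (t + b) L),
            (if SatC L y i ψ' then (1:ℝ) else 0)
            = ((Finset.Icc (min (t + a) L) (min (t + b) L)).card : ℝ) := by
          have heq : ∀ i ∈ Finset.Icc (min (t + a) L) (min (t + b) L),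
              (if SatC L y i ψ' then (1:ℝ) else 0) = 1 := fun i hi => by simp [hall i hi]
          rw [Finset.sum_congr rfl heq, Finset.sum_const, nsmul_eq_mul, mul_one]
        refine ⟨fun i hi => by simp [hs, hall i hi], ?_⟩
        rw [hsum]; simp [hs]
      · have : ¬ ∀ i, min (t + a) L ≤ i → i ≤ min (t + b) L → SatC L y i ψ' := by
          simpa [SatC] using hs
        push_neg at this
        obtain ⟨i0, hi1, hi2, hns⟩ := this
        have hi0 : i0 ∈ Finset.Icc (min (t + a) L) (min (t + b) L) :=
          Finset.mem_Icc.mpr ⟨hi1, hi2⟩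
        constructor
        · intro i hi; simp only [hs, if_false]; exact hnn ψ' i
        · set s := Finset.Icc (min (t + a) L) (min (t + b) L) with hsdef
          have herase : ∑ i ∈ s.erase i0, (if SatC L y i ψ' then (1:ℝ) else 0)
              ≤ ((s.erase i0).card : ℝ) := by
            calc ∑ i ∈ s.erase i0, (if SatC L y i ψ' then (1:ℝ) else 0)
                ≤ ∑ i ∈ s.erase i0, (1:ℝ) := Finset.sum_le_sum (fun i _ => hle1 ψ' i)
              _ = ((s.erase i0).card : ℝ) := by simp
          have hkey : ∑ i ∈ s, (if SatC L y i ψ' then (1:ℝ) else 0) ≤ (s.card : ℝ) - 1 := by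
            rw [← Finset.sum_erase_add s _ hi0]
            have hcard : ((s.erase i0).card : ℝ) = (s.card : ℝ) - 1 := by
              rw [Finset.card_erase_of_mem hi0]
              have : 1 ≤ s.card := Finset.card_pos.mpr ⟨i0, hi0⟩
              push_cast [Nat.cast_sub this]; ring
            simp only [hns, if_false]
            rw [hcard] at herase; linarith
          simp only [hs, if_false]; linarith
    | event a b ψ' =>
      simp only [EncOK]
      by_cases hs : SatC L y t (.event a b ψ')
      · obtain ⟨i0, hi1, hi2, hsc⟩ : ∃ i, min (t + a) L ≤ i ∧ i ≤ min (t + b) L ∧ SatC L y i ψ' := by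
          simpa [SatC] using hs
        have hi0 : i0 ∈ Finset.Icc (min (t + a) L) (min (t + b) L) :=
          Finset.mem_Icc.mpr ⟨hi1, hi2⟩
        refine ⟨fun i hi => by simp [hs]; exact hle1 ψ' i, ?_⟩
        have := Finset.single_le_sum (f := fun i => if SatC L y i ψ' then (1:ℝ) else 0)
          (fun i _ => hnn ψ' i) hi0
        simp only [hs, if_true]
        simpa [hsc] using this
      · have hnone : ∀ i ∈ Finset.Icc (min (t + a) L) (min (t + b) L), ¬ SatC L y i ψ' := by
          intro i hi hc
          rw [Finset.mem_Icc] at hi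
          exact hs (by simp only [SatC]; exact ⟨i, hi.1, hi.2, hc⟩)
        refine ⟨fun i hi => by simp [hs, hnone i hi], ?_⟩
        simp only [hs, if_false]
        exact Finset.sum_nonneg (fun i _ => hnn ψ' i)
  · have : SatC L y 0 φ := sat_satC hag 0 φ hwf (by simpa using hlen) hsat0
    simp [this]
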